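/- For an integer $k \geq 2$ and complex numbers $x, y$ with $|x| < 1$, $|y| < 1$, $x, y \neq 0$, the identity $\mathrm{Li}_{k-1}(xy)\,\mathrm{Li}_1(y) = \mathrm{Li}_{1,k-1}(x^{-1}, xy) + \sum_{j=1}^{k-1} \mathrm{Li}_{k-j,j}(x, y)$ holds. -/

import Mathlib

/-
Both sides are absolutely convergent double series in `(x * y) ^ a * y ^ b`, `a, b ≥ 1`: the
product `Li_{k-1}(xy) Li_1(y)` has coefficient `1 / (a ^ (k-1) * b)`, the term
`Li_{1,k-1}(x⁻¹, xy)` (with `m₁ = b`, `m₂ = a + b`) has coefficient `1 / (b * (a+b) ^ (k-1))`, and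
`Li_{k-j,j}(x, y)` (with `m₁ = a`, `m₂ = a + b`) has coefficient `1 / (a ^ (k-j) * (a+b) ^ j)`.
The theorem is therefore the partial fraction decomposition of `1 / (a ^ (k-1) * b)`, obtained by
iterating `1 / (a b) = 1 / (a (a+b)) + 1 / (b (a+b))`.
-/

open scoped BigOperators

/-- The polylogarithm `Li_k(z) = ∑_{m ≥ 1} z^m / m^k`. -/
noncomputable def Li (k : ℕ) (z : ℂ) : ℂ :=
  ∑' m : ℕ, z ^ (m + 1) / ((m + 1 : ℕ) : ℂ) ^ k

/-- The double polylogarithm `Li_{k₁,k₂}(z₁,z₂) = ∑_{0 < m₁ < m₂} z₁^{m₁} z₂^{m₂} / (m₁^{k₁} m₂^{k₂})`,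
parametrized by `m₁ = p.1 + 1`, `m₂ = p.1 + p.2 + 2`. -/
noncomputable def Li₂ (k₁ k₂ : ℕ) (z₁ z₂ : ℂ) : ℂ :=
  ∑' p : ℕ × ℕ, z₁ ^ (p.1 + 1) * z₂ ^ (p.1 + p.2 + 2) /
    (((p.1 + 1) ^ k₁ * (p.1 + p.2 + 2) ^ k₂ : ℕ) : ℂ)

open Finset

theorem inv_pow_mul_eq_inv_mul_pow_add_sum {K : Type*} [Field K] {a b c : K} (ha : a ≠ 0)
    (hb : b ≠ 0) (hc : c ≠ 0) (habc : a + b = c) (n : ℕ) :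
    (a ^ n * b)⁻¹ = (b * c ^ n)⁻¹ + ∑ j ∈ Icc 1 n, (a ^ (n + 1 - j) * c ^ j)⁻¹ := by
  induction n with
  | zero => simp
  | succ n ih =>
    have hshift : ∑ j ∈ Icc 1 n, (a ^ (n + 1 + 1 - j) * c ^ j)⁻¹
        = a⁻¹ * ∑ j ∈ Icc 1 n, (a ^ (n + 1 - j) * c ^ j)⁻¹ := by
      rw [mul_sum]
      refine sum_congr rfl fun j hj => ?_
      rw [show n + 1 + 1 - j = n + 1 - j + 1 by grind, pow_succ]
      field_simp
    have hsum : ∑ j ∈ Icc 1 n, (a ^ (n + 1 - j) * c ^ j)⁻¹ = (a ^ n * b)⁻¹ - (b * c ^ n)⁻¹ := by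
      rw [ih]; ring
    rw [sum_Icc_succ_top (by omega), hshift, hsum, Nat.add_sub_cancel_left]
    subst habc
    field_simp
    ring

theorem norm_div_natCast_le (u : ℂ) {n : ℕ} (hn : n ≠ 0) : ‖u / n‖ ≤ ‖u‖ := by
  rw [norm_div, Complex.norm_natCast]
  exact div_le_self (norm_nonneg u) (by exact_mod_cast Nat.one_le_iff_ne_zero.mpr hn)

theorem summable_norm_pow_succ {z : ℂ} (hz : ‖z‖ < 1) : Summable fun m : ℕ => ‖z ^ (m + 1)‖ :=
  (summable_nat_add_iff 1).mpr (summable_norm_geometric_of_norm_lt_one hz)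

theorem summable_norm_Li_term (k : ℕ) {z : ℂ} (hz : ‖z‖ < 1) :
    Summable fun m : ℕ => ‖z ^ (m + 1) / ((m + 1 : ℕ) : ℂ) ^ k‖ :=
  (summable_norm_pow_succ hz).of_nonneg_of_le (fun _ => norm_nonneg _) fun m => by
    simpa only [Nat.cast_pow] using norm_div_natCast_le _ (pow_ne_zero k m.succ_ne_zero)

theorem summable_pow_mul_pow_div_natCast {w z : ℂ} (hw : ‖w‖ < 1) (hz : ‖z‖ < 1)
    {d : ℕ × ℕ → ℕ} (hd : ∀ p, d p ≠ 0) :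
    Summable fun p : ℕ × ℕ => w ^ (p.1 + 1) * z ^ (p.2 + 1) / (d p : ℂ) :=
  .of_norm_bounded ((summable_norm_pow_succ hw).mul_norm (summable_norm_pow_succ hz))
    fun p => norm_div_natCast_le _ (hd p)

theorem Li_mul_Li (k l : ℕ) {z w : ℂ} (hz : ‖z‖ < 1) (hw : ‖w‖ < 1) :
    Li k z * Li l w = ∑' p : ℕ × ℕ,
      z ^ (p.1 + 1) / ((p.1 + 1 : ℕ) : ℂ) ^ k * (w ^ (p.2 + 1) / ((p.2 + 1 : ℕ) : ℂ) ^ l) :=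
  tsum_mul_tsum_of_summable_norm (summable_norm_Li_term k hz) (summable_norm_Li_term l hw)

theorem Li₂_eq_tsum_mul_pow_mul_pow (k₁ k₂ : ℕ) (z₁ z₂ : ℂ) :
    Li₂ k₁ k₂ z₁ z₂ = ∑' p : ℕ × ℕ, (z₁ * z₂) ^ (p.1 + 1) * z₂ ^ (p.2 + 1) /
      (((p.1 + 1) ^ k₁ * (p.1 + p.2 + 2) ^ k₂ : ℕ) : ℂ) := by
  refine tsum_congr fun p => ?_
  rw [mul_pow, mul_assoc, ← pow_add]
  congr 3
  omega

theorem Li₂_inv_mul_eq_tsum (k₁ k₂ : ℕ) {x : ℂ} (hx : x ≠ 0) (y : ℂ) :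
    Li₂ k₁ k₂ x⁻¹ (x * y) = ∑' p : ℕ × ℕ, (x * y) ^ (p.1 + 1) * y ^ (p.2 + 1) /
      (((p.2 + 1) ^ k₁ * (p.1 + p.2 + 2) ^ k₂ : ℕ) : ℂ) := by
  rw [Li₂_eq_tsum_mul_pow_mul_pow, inv_mul_cancel_left₀ hx, ← (Equiv.prodComm ℕ ℕ).tsum_eq]
  refine tsum_congr fun p => ?_
  simp only [Equiv.prodComm_apply, Prod.fst_swap, Prod.snd_swap]
  rw [mul_comm (y ^ _), add_comm p.2 p.1]

theorem Li_mul_Li_one_summand (N m n : ℕ) (u y : ℂ) :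
    u ^ (m + 1) / ((m + 1 : ℕ) : ℂ) ^ N * (y ^ (n + 1) / ((n + 1 : ℕ) : ℂ) ^ 1) =
      u ^ (m + 1) * y ^ (n + 1) / (((n + 1) ^ 1 * (m + n + 2) ^ N : ℕ) : ℂ) +
        ∑ j ∈ Icc 1 N, u ^ (m + 1) * y ^ (n + 1) /
          (((m + 1) ^ (N + 1 - j) * (m + n + 2) ^ j : ℕ) : ℂ) := by
  have key := inv_pow_mul_eq_inv_mul_pow_add_sum (a := (m + 1 : ℂ)) (b := (n + 1 : ℂ))
    (c := (m + n + 2 : ℂ)) (by exact_mod_cast m.succ_ne_zero) (by exact_mod_cast n.succ_ne_zero)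
    (by exact_mod_cast (m + n + 1).succ_ne_zero) (by ring) N
  simp only [div_eq_mul_inv, ← mul_sum]
  push_cast
  rw [pow_one, mul_mul_mul_comm, ← mul_inv, key, mul_add]

theorem Li_mul_Li_one (N : ℕ) {x y : ℂ} (hx : x ≠ 0) (hxy : ‖x * y‖ < 1) (hy : ‖y‖ < 1) :
    Li N (x * y) * Li 1 y =
      Li₂ 1 N x⁻¹ (x * y) + ∑ j ∈ Icc 1 N, Li₂ (N + 1 - j) j x y := by
  simp only [Li_mul_Li N 1 hxy hy, Li₂_inv_mul_eq_tsum 1 N hx y, Li₂_eq_tsum_mul_pow_mul_pow]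
  have hterm (i : ℕ) := summable_pow_mul_pow_div_natCast hxy hy
    (d := fun p => (p.1 + 1) ^ (N + 1 - i) * (p.1 + p.2 + 2) ^ i) fun _ => by positivity
  rw [← Summable.tsum_finsetSum fun i _ => hterm i,
    ← Summable.tsum_add _ (summable_sum fun i _ => hterm i)]
  · exact tsum_congr fun p => Li_mul_Li_one_summand N p.1 p.2 (x * y) y
  · exact summable_pow_mul_pow_div_natCast hxy hy fun _ => by positivity

theorem shuffle_type_identity_general (k : ℕ) (x y : ℂ)
    (hx : ‖x‖ < 1) (hy : ‖y‖ < 1) (hx0 : x ≠ 0) :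
    Li (k - 1) (x * y) * Li 1 y =
      Li₂ 1 (k - 1) x⁻¹ (x * y) + ∑ j ∈ Finset.Icc 1 (k - 1), Li₂ (k - j) j x y := by
  have hxy : ‖x * y‖ < 1 := by
    rw [norm_mul]
    exact mul_lt_one_of_nonneg_of_lt_one_left (norm_nonneg x) hx hy.le
  rw [Li_mul_Li_one (k - 1) hx0 hxy hy]
  congr 1
  refine Finset.sum_congr rfl fun j hj => ?_
  rw [show k - 1 + 1 - j = k - j by grind]

theorem shuffle_type_identity (k : ℕ) (hk : 2 ≤ k) (x y : ℂ)
    (hx : ‖x‖ < 1) (hy : ‖y‖ < 1) (hx0 : x ≠ 0) (hy0 : y ≠ 0) :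
    Li (k - 1) (x * y) * Li 1 y =
      Li₂ 1 (k - 1) x⁻¹ (x * y) + ∑ j ∈ Finset.Icc 1 (k - 1), Li₂ (k - j) j x y :=
  shuffle_type_identity_general k x y hx hy hx0
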